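/- Let T be a pretriangulated category admitting arbitrary (small) coproducts, and let ∧ and ∧′ be two symmetric monoidal structures on T, each with the same unit 𝕀, each bi-exact (for every X the functors X ∧ − , − ∧ X, X ∧′ − and − ∧′ X are triangulated and preserve arbitrary coproducts), and suppose 𝕀 is a small weak generator of T. Suppose the identity functor of T is lax monoidal from (T, ∧) to (T, ∧′), with unit morphism η : 𝕀 → 𝕀 and natural comparison maps φ_{A,B} : A ∧′ B → A ∧ B compatible with the shift in each variable. If η is an isomorphism and φ_{𝕀,𝕀} : 𝕀 ∧′ 𝕀 → 𝕀 ∧ 𝕀 is an isomorphism, then φ_{A,B} is an isomorphism for all objects A and B; hence the two monoidal structures are monoidally equivalent via the identity functor. -/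

import Mathlib

/-!
STATEMENT 2: Let `T` be a pretriangulated category with arbitrary coproducts and let `∧`
(`M`) and `∧′` (`M'`) be two bi-exact symmetric monoidal structures on `T` with the same
unit `𝕀`, which is a small weak generator.  Suppose the identity functor is lax monoidal
from `(T, ∧)` to `(T, ∧′)`, with unit morphism `η : 𝕀 ⟶ 𝕀` and natural comparison maps
`φ A B : A ∧′ B ⟶ A ∧ B` compatible with the shift in each variable.  If `η` and
`φ 𝕀 𝕀` are isomorphisms then every `φ A B` is an isomorphism, so the two monoidal
structures are monoidally equivalent via the identity functor.
-/

open CategoryTheory Category Limits Pretriangulated MonoidalCategory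

universe v u

namespace Paper

variable {C : Type u} [Category.{v} C]

/-- The canonical map `⊕ᵢ Hom(G, Aᵢ) →+ Hom(G, ∐ᵢ Aᵢ)`. -/
noncomputable def coproductComparison [Preadditive C] (G : C) {ι : Type v} (A : ι → C)
    [HasCoproduct A] : DirectSum ι (fun i => G ⟶ A i) →+ (G ⟶ ∐ A) :=
  letI := Classical.decEq ι
  DirectSum.toAddMonoid fun i =>
    AddMonoidHom.mk' (fun g => g ≫ Sigma.ι A i) fun _ _ => Preadditive.add_comp _ _ _ _ _ _

/-- An object `G` is small if for every family of objects admitting a coproduct, the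
canonical map `⊕ᵢ Hom(G, Aᵢ) → Hom(G, ∐ᵢ Aᵢ)` is an isomorphism (bijective). -/
def IsSmallObject [Preadditive C] (G : C) : Prop :=
  ∀ ⦃ι : Type v⦄ (A : ι → C) [HasCoproduct A], Function.Bijective (coproductComparison G A)

/-- An object `G` is a weak generator if a map `f : X ⟶ Y` is an isomorphism exactly when
`Hom(G⟦n⟧, X) → Hom(G⟦n⟧, Y)` is bijective for all integers `n`. -/
def IsWeakGenerator [HasShift C ℤ] (G : C) : Prop :=
  ∀ ⦃X Y : C⦄ (f : X ⟶ Y),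
    IsIso f ↔ ∀ n : ℤ, Function.Bijective fun g : G⟦n⟧ ⟶ X => g ≫ f

end Paper

open Paper

/-!
Fix `B`. The maps `φ A B` form a natural transformation `ψ : - ∧′ B ⟶ - ∧ B` between
triangulated, coproduct-preserving functors, compatible with the shifts, so the objects `A`
at which `ψ` is invertible are closed under isomorphisms, shifts, cones and coproducts. By the
unit axiom and the invertibility of `η` they contain `𝕀`. Such a class containing a small weak
generator `G` is everything: any `A` is the homotopy colimit of a tower `X₀ → X₁ → ⋯` over `A`,
built from sums of shifts of `G` by cones, where `X₀` maps onto every `Hom(G⟦n⟧, A)` and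
`X_{i+1}` kills the kernel of `Hom(G⟦n⟧, X_i) → Hom(G⟦n⟧, A)`. Since `G⟦n⟧` is small,
`Hom(G⟦n⟧, -)` turns the homotopy colimit into the colimit of the `Hom(G⟦n⟧, X_i)`, which maps
bijectively to `Hom(G⟦n⟧, A)`.
-/

namespace Paper

variable {C : Type u} [Category.{v} C]

section Small

variable [Preadditive C]

lemma coproductComparison_of {ι : Type v} [inst : DecidableEq ι] (G : C) (A : ι → C)
    [HasCoproduct A] (i : ι) (g : G ⟶ A i) :
    coproductComparison G A (DirectSum.of (fun i => G ⟶ A i) i g) = g ≫ Sigma.ι A i := by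
  obtain rfl : inst = Classical.decEq ι := Subsingleton.elim _ _
  classical
  exact DirectSum.toAddMonoid_of _ _ _

lemma IsSmallObject.of_adjunction {D : Type*} [Category.{v} D] [Preadditive D]
    [HasCoproducts.{v} C] {F : C ⥤ D} {R : D ⥤ C} (adj : F ⊣ R) [F.Additive]
    [∀ ι : Type v, PreservesColimitsOfShape (Discrete ι) R] {G : C} (hG : IsSmallObject G) :
    IsSmallObject (F.obj G) := by
  intro ι A _
  classical
  let transpose := DFinsupp.mapRange.addEquiv fun i => adj.homAddEquiv G (A i)
  have hcomp : ∀ x, coproductComparison (F.obj G) A x = (adj.homEquiv _ _).symm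
      (coproductComparison G (fun i => R.obj (A i)) (transpose x) ≫ sigmaComparison R A) := by
    intro x
    induction x using DirectSum.induction_on with
    | zero => simp
    | of i g =>
      have htranspose : transpose (DirectSum.of _ i g) =
          DirectSum.of _ i (adj.homEquiv G (A i) g) :=
        DFinsupp.mapRange_single (hf := fun _ => map_zero _)
      rw [htranspose, coproductComparison_of, coproductComparison_of, assoc,
        ι_comp_sigmaComparison, ← adj.homEquiv_naturality_right, Equiv.symm_apply_apply]
    | add x y hx hy => simp [hx, hy, Preadditive.add_comp]
  have hpost : Function.Bijective (· ≫ sigmaComparison R A :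
      (G ⟶ ∐ fun i => R.obj (A i)) → _) :=
    ⟨fun a b h => by simpa using congrArg (· ≫ inv (sigmaComparison R A)) h,
      fun y => ⟨y ≫ inv (sigmaComparison R A), by simp⟩⟩
  exact funext hcomp ▸ (adj.homEquiv _ _).symm.bijective.comp
    (hpost.comp ((hG _).comp transpose.bijective))

lemma IsSmallObject.shift [HasShift C ℤ] [∀ n : ℤ, (shiftFunctor C n).Additive]
    [HasCoproducts.{v} C] {G : C} (hG : IsSmallObject G) (n : ℤ) : IsSmallObject (G⟦n⟧) :=
  have : (shiftEquiv C n).functor.Additive := inferInstanceAs (shiftFunctor C n).Additive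
  hG.of_adjunction (shiftEquiv C n).toAdjunction

end Small

section Sequence

variable (X : ℕ → C) (j : ∀ i, X i ⟶ X (i + 1))

-- Reindexed by `ULift ℕ`, since coproducts are only assumed for index types in `Type v`.
abbrev seqFamily : ULift.{v} ℕ → C := fun i => X i.down

variable {X} in
lemma exists_comp_eq_of_le {H Q : C} {c : ∀ i, X i ⟶ Q} (hc : ∀ i, c i = j i ≫ c (i + 1))
    {N M : ℕ} (hNM : N ≤ M) (g : H ⟶ X N) : ∃ g' : H ⟶ X M, g' ≫ c M = g ≫ c N := by
  induction M, hNM using Nat.le_induction with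
  | base => exact ⟨g, rfl⟩
  | succ M _ ih =>
    obtain ⟨g', hg'⟩ := ih
    exact ⟨g' ≫ j M, by rw [assoc, ← hc, hg']⟩

section

variable [Preadditive C]

def seqTransitionSum (H : C) :
    DirectSum (ULift.{v} ℕ) (fun i => H ⟶ seqFamily X i) →+
      DirectSum (ULift.{v} ℕ) (fun i => H ⟶ seqFamily X i) :=
  DirectSum.toAddMonoid fun i =>
    (DirectSum.of (fun i => H ⟶ seqFamily X i) ⟨i.down + 1⟩).comp
      (Preadditive.rightComp H (j i.down))

variable {X} {H : C}

lemma seqTransitionSum_of (i : ℕ) (g : H ⟶ X i) :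
    seqTransitionSum X j H (DirectSum.of (fun i => H ⟶ seqFamily X i) ⟨i⟩ g) =
      DirectSum.of (fun i => H ⟶ seqFamily X i) ⟨i + 1⟩ (g ≫ j i) :=
  DirectSum.toAddMonoid_of _ _ _

lemma seqTransitionSum_apply_zero (x : DirectSum (ULift.{v} ℕ) (fun i => H ⟶ seqFamily X i)) :
    seqTransitionSum X j H x ⟨0⟩ = 0 := by
  induction x using DirectSum.induction_on with
  | zero => simp
  | of i g =>
    rw [seqTransitionSum_of]
    exact DirectSum.of_eq_of_ne _ _ _ (by simp)
  | add x y hx hy => rw [map_add, DirectSum.add_apply, hx, hy, add_zero]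

lemma seqTransitionSum_apply_succ (x : DirectSum (ULift.{v} ℕ) (fun i => H ⟶ seqFamily X i))
    (k : ℕ) : seqTransitionSum X j H x ⟨k + 1⟩ = x ⟨k⟩ ≫ j k := by
  induction x using DirectSum.induction_on with
  | zero => simp
  | of i g =>
    obtain ⟨i⟩ := i
    rw [seqTransitionSum_of]
    by_cases h : i = k
    · subst h
      rw [DirectSum.of_eq_same, DirectSum.of_eq_same]
    · rw [DirectSum.of_eq_of_ne _ _ _ (by simpa using Ne.symm h),
        DirectSum.of_eq_of_ne _ _ _ (by simpa using Ne.symm h), zero_comp]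
  | add x y hx hy =>
    rw [map_add, DirectSum.add_apply, DirectSum.add_apply, hx, hy, Preadditive.add_comp]

end

variable [HasCoproducts.{v} C]

noncomputable def seqTransition : ∐ seqFamily X ⟶ ∐ seqFamily X :=
  Sigma.desc fun i => j i.down ≫ Sigma.ι (seqFamily X) ⟨i.down + 1⟩

lemma ι_seqTransition (i : ℕ) :
    Sigma.ι (seqFamily X) ⟨i⟩ ≫ seqTransition X j = j i ≫ Sigma.ι (seqFamily X) ⟨i + 1⟩ :=
  Sigma.ι_desc _ _

variable [Preadditive C] {X} {H : C}

lemma coproductComparison_seqTransitionSum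
    (x : DirectSum (ULift.{v} ℕ) (fun i => H ⟶ seqFamily X i)) :
    coproductComparison H _ (seqTransitionSum X j H x) =
      coproductComparison H _ x ≫ seqTransition X j := by
  induction x using DirectSum.induction_on with
  | zero => simp
  | of i g =>
    obtain ⟨i⟩ := i
    simp only [seqTransitionSum_of, coproductComparison_of, assoc, ι_seqTransition]
  | add x y hx hy => rw [map_add, map_add, hx, hy, map_add, Preadditive.add_comp]

lemma eq_zero_of_comp_sub_seqTransition (hH : IsSmallObject H) {u : H ⟶ ∐ seqFamily X}
    (hu : u ≫ (𝟙 _ - seqTransition X j) = 0) : u = 0 := by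
  obtain ⟨x, rfl⟩ := (hH (seqFamily X)).2 u
  have hx : x = seqTransitionSum X j H x := (hH _).1 <| by
    rw [coproductComparison_seqTransitionSum, ← sub_eq_zero, ← hu, Preadditive.comp_sub,
      comp_id]
  have hcomp : ∀ k : ℕ, x ⟨k⟩ = 0 := by
    intro k
    induction k with
    | zero => rw [hx, seqTransitionSum_apply_zero]
    | succ k ih => rw [hx, seqTransitionSum_apply_succ, ih, zero_comp]
  rw [show x = 0 from DFinsupp.ext fun i => hcomp i.down, map_zero]

lemma exists_coproductComparison_comp_eq {Q : C} {q : ∐ seqFamily X ⟶ Q}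
    (hq : ∀ i, Sigma.ι (seqFamily X) ⟨i⟩ ≫ q = j i ≫ Sigma.ι (seqFamily X) ⟨i + 1⟩ ≫ q)
    (x : DirectSum (ULift.{v} ℕ) (fun i => H ⟶ seqFamily X i)) :
    ∃ (N : ℕ) (g : H ⟶ X N),
      coproductComparison H _ x ≫ q = g ≫ Sigma.ι (seqFamily X) ⟨N⟩ ≫ q := by
  classical
  induction x using DirectSum.induction_on with
  | zero => exact ⟨0, 0, by simp⟩
  | of i g => exact ⟨i.down, g, by rw [coproductComparison_of, assoc]⟩
  | add x y hx hy =>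
    obtain ⟨N₁, g₁, h₁⟩ := hx
    obtain ⟨N₂, g₂, h₂⟩ := hy
    obtain ⟨g₁', hg₁⟩ := exists_comp_eq_of_le j hq (le_max_left N₁ N₂) g₁
    obtain ⟨g₂', hg₂⟩ := exists_comp_eq_of_le j hq (le_max_right N₁ N₂) g₂
    exact ⟨max N₁ N₂, g₁' + g₂', by
      rw [map_add, Preadditive.add_comp, h₁, h₂, ← hg₁, ← hg₂, Preadditive.add_comp]⟩

end Sequence

section IsoLocus

variable {D : Type*} [Category* D] {F G : C ⥤ D} (ψ : F ⟶ G)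

def isoLocus : ObjectProperty C := fun X => IsIso (ψ.app X)

instance : (isoLocus ψ).IsClosedUnderIsomorphisms where
  of_iso e h := (NatTrans.isIso_app_iff_of_iso ψ e).1 h

instance [HasShift C ℤ] [HasShift D ℤ] [F.CommShift ℤ] [G.CommShift ℤ]
    [NatTrans.CommShift ψ ℤ] : (isoLocus ψ).IsStableUnderShift ℤ where
  isStableUnderShiftBy n := ⟨fun X (_ : IsIso (ψ.app X)) => by
    change IsIso (ψ.app (X⟦n⟧))
    rw [NatTrans.app_shift ψ n X]
    infer_instance⟩

instance {J : Type*} [Category* J] [PreservesColimitsOfShape J F]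
    [PreservesColimitsOfShape J G] : (isoLocus ψ).IsClosedUnderColimitsOfShape J where
  colimitsOfShape_le := by
    rintro X ⟨c⟩
    have : ∀ j, IsIso ((Functor.whiskerLeft c.diag ψ).app j) := c.prop_diag_obj
    have : IsIso (Functor.whiskerLeft c.diag ψ) := NatIso.isIso_of_isIso_app _
    let hF := isColimitOfPreserves F c.isColimit
    let hG := isColimitOfPreserves G c.isColimit
    have hψ : ψ.app X =
        (hF.coconePointsIsoOfNatIso hG (asIso (Functor.whiskerLeft c.diag ψ))).hom :=
      hF.hom_ext fun j => (ψ.naturality _).trans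
        (hF.ι_map (G.mapCocone _) (Functor.whiskerLeft c.diag ψ) j).symm
    change IsIso (ψ.app X)
    rw [hψ]
    infer_instance

instance [HasZeroObject C] [HasShift C ℤ] [Preadditive C] [∀ n : ℤ, (shiftFunctor C n).Additive]
    [Pretriangulated C] [HasZeroObject D] [HasShift D ℤ] [Preadditive D]
    [∀ n : ℤ, (shiftFunctor D n).Additive] [Pretriangulated D] [F.CommShift ℤ] [G.CommShift ℤ]
    [F.IsTriangulated] [G.IsTriangulated] [NatTrans.CommShift ψ ℤ] :
    (isoLocus ψ).IsTriangulatedClosed₃ :=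
  .mk' fun T hT (_ : IsIso (ψ.app T.obj₁)) (_ : IsIso (ψ.app T.obj₂)) =>
    isIso₃_of_isIso₁₂ (T := F.mapTriangle.obj T) (T' := G.mapTriangle.obj T)
      (Triangle.homMk _ _ (ψ.app _) (ψ.app _) (ψ.app _) (ψ.naturality _) (ψ.naturality _)
        (show (F.map T.mor₃ ≫ (F.commShiftIso 1).hom.app T.obj₁) ≫ (ψ.app T.obj₁)⟦1⟧' =
            ψ.app T.obj₃ ≫ G.map T.mor₃ ≫ (G.commShiftIso 1).hom.app T.obj₁ by
          rw [assoc, NatTrans.shift_app_comm, NatTrans.naturality_assoc]))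
      (F.map_distinguished T hT) (G.map_distinguished T hT) ‹_› ‹_›

end IsoLocus

section Cells

variable [HasShift C ℤ] [HasCoproducts.{v} C] {P : ObjectProperty C} [P.IsStableUnderShift ℤ]
  [∀ ι : Type v, P.IsClosedUnderColimitsOfShape (Discrete ι)] {G : C} (hPG : P G)
include hPG

lemma prop_sigma_shift {ι : Type v} (n : ι → ℤ) : P (∐ fun i => G⟦n i⟧) :=
  P.prop_colimit (Discrete.functor fun i => G⟦n i⟧) fun i => P.le_shift (n i.as) _ hPG

lemma exists_prop_surjective_cover (A : C) :
    ∃ (X : C) (p : X ⟶ A), P X ∧ ∀ (n : ℤ) (a : G⟦n⟧ ⟶ A), ∃ b, b ≫ p = a := by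
  let ι := (n : ULift.{v} ℤ) × (G⟦n.down⟧ ⟶ A)
  let K := fun w : ι => G⟦w.1.down⟧
  exact ⟨∐ K, Sigma.desc fun w => w.2, prop_sigma_shift hPG fun w : ι => w.1.down,
    fun n a => ⟨Sigma.ι K ⟨⟨n⟩, a⟩, Sigma.ι_desc _ _⟩⟩

end Cells

section Pretriangulated

variable [HasZeroObject C] [HasShift C ℤ] [Preadditive C] [∀ n : ℤ, (shiftFunctor C n).Additive]
  [Pretriangulated C] [HasCoproducts.{v} C]

def IsHocolimTriangle {X : ℕ → C} (j : ∀ i, X i ⟶ X (i + 1)) {Z : C} (q : ∐ seqFamily X ⟶ Z)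
    (d : Z ⟶ (∐ seqFamily X)⟦(1 : ℤ)⟧) : Prop :=
  Triangle.mk (𝟙 _ - seqTransition X j) q d ∈ distTriang C

namespace IsHocolimTriangle

variable {X : ℕ → C} {j : ∀ i, X i ⟶ X (i + 1)} {Z : C} {q : ∐ seqFamily X ⟶ Z}
  {d : Z ⟶ (∐ seqFamily X)⟦(1 : ℤ)⟧} (hT : IsHocolimTriangle j q d)
include hT

lemma ι_comp (i : ℕ) :
    Sigma.ι (seqFamily X) ⟨i⟩ ≫ q = j i ≫ Sigma.ι (seqFamily X) ⟨i + 1⟩ ≫ q := by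
  have hq : (𝟙 _ - seqTransition X j) ≫ q = 0 := comp_distTriang_mor_zero₁₂ _ hT
  rw [Preadditive.sub_comp, id_comp, sub_eq_zero] at hq
  conv_lhs => rw [hq]
  rw [← assoc, ι_seqTransition, assoc]

-- `g ≫ d` is killed by `(𝟙 - seqTransition)⟦1⟧`, which is injective on maps out of `H`
-- because `𝟙 - seqTransition` is injective on maps out of the small object `H⟦-1⟧`.
lemma comp_mor₃_eq_zero {H : C} (hH : IsSmallObject H) (g : H ⟶ Z) : g ≫ d = 0 := by
  have hd : d ≫ (𝟙 _ - seqTransition X j)⟦(1 : ℤ)⟧' = 0 := comp_distTriang_mor_zero₃₁ _ hT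
  let e := shiftFunctorCompIsoId C (-1 : ℤ) 1 (by norm_num)
  obtain ⟨w, hw⟩ := (shiftFunctor C (1 : ℤ)).map_surjective (e.hom.app H ≫ g ≫ d)
  have hw0 : w = 0 := eq_zero_of_comp_sub_seqTransition j (hH.shift (-1)) <|
    (shiftFunctor C (1 : ℤ)).map_injective <| by
      rw [Functor.map_comp, hw, assoc, assoc, hd, comp_zero, comp_zero, Functor.map_zero]
  rw [← e.inv_hom_id_app_assoc H (g ≫ d), ← hw, hw0, Functor.map_zero, comp_zero]

lemma exists_eq_comp_ι_comp {H : C} (hH : IsSmallObject H) (g : H ⟶ Z) :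
    ∃ (N : ℕ) (g' : H ⟶ X N), g = g' ≫ Sigma.ι (seqFamily X) ⟨N⟩ ≫ q := by
  obtain ⟨u, rfl⟩ := Triangle.coyoneda_exact₃ _ hT g (hT.comp_mor₃_eq_zero hH g)
  obtain ⟨x, rfl⟩ := (hH _).2 u
  exact exists_coproductComparison_comp_eq j hT.ι_comp x

lemma isIso_of_isWeakGenerator {G A : C} (hGs : IsSmallObject G) (hGg : IsWeakGenerator G)
    {p : ∀ i, X i ⟶ A} (hsurj : ∀ (n : ℤ) (a : G⟦n⟧ ⟶ A), ∃ b, b ≫ p 0 = a)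
    (hkill : ∀ i (n : ℤ) (g : G⟦n⟧ ⟶ X i), g ≫ p i = 0 → g ≫ j i = 0)
    {r : Z ⟶ A} (hr : ∀ i, Sigma.ι (seqFamily X) ⟨i⟩ ≫ q ≫ r = p i) : IsIso r := by
  refine (hGg r).2 fun n => ⟨?_, fun a => ?_⟩
  · refine (injective_iff_map_eq_zero (Preadditive.rightComp (G⟦n⟧) r)).2 fun g hg => ?_
    obtain ⟨N, g', rfl⟩ := hT.exists_eq_comp_ι_comp (hGs.shift n) g
    have hg' : g' ≫ p N = 0 := by
      simpa only [Preadditive.rightComp, AddMonoidHom.mk'_apply, assoc, hr] using hg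
    rw [hT.ι_comp, ← assoc, hkill N n g' hg', zero_comp]
  · obtain ⟨b, rfl⟩ := hsurj n a
    exact ⟨b ≫ Sigma.ι (seqFamily X) ⟨0⟩ ≫ q, by simp only [assoc, hr]⟩

end IsHocolimTriangle

section Generation

variable {P : ObjectProperty C} [P.IsStableUnderShift ℤ] [P.IsTriangulatedClosed₃]
  [∀ ι : Type v, P.IsClosedUnderColimitsOfShape (Discrete ι)] {G : C} (hPG : P G)
include hPG

lemma exists_prop_extension_killing {X A : C} (p : X ⟶ A) (hX : P X) :
    ∃ (X' : C) (i : X ⟶ X') (p' : X' ⟶ A), P X' ∧ i ≫ p' = p ∧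
      ∀ (n : ℤ) (g : G⟦n⟧ ⟶ X), g ≫ p = 0 → g ≫ i = 0 := by
  let ι := (n : ULift.{v} ℤ) × {g : G⟦n.down⟧ ⟶ X // g ≫ p = 0}
  let K := fun w : ι => G⟦w.1.down⟧
  let k : ∐ K ⟶ X := Sigma.desc fun w => w.2.1
  obtain ⟨X', hX', i, d, hT⟩ :=
    P.distinguished_cocone_triangle k (prop_sigma_shift hPG fun w : ι => w.1.down) hX
  have hkp : k ≫ p = 0 :=
    Sigma.hom_ext _ _ fun ⟨_, _, hg⟩ => by rw [← assoc, Sigma.ι_desc, hg, comp_zero]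
  obtain ⟨p', hp'⟩ : ∃ p' : X' ⟶ A, p = i ≫ p' := Triangle.yoneda_exact₂ _ hT p hkp
  refine ⟨X', i, p', hX', hp'.symm, fun n g hg => ?_⟩
  have hk : g = Sigma.ι K ⟨⟨n⟩, g, hg⟩ ≫ k := by simp [k]
  have hki : k ≫ i = 0 := comp_distTriang_mor_zero₁₂ _ hT
  rw [hk, assoc, hki, comp_zero]

theorem prop_of_isSmallObject_of_isWeakGenerator [P.IsClosedUnderIsomorphisms]
    (hGs : IsSmallObject G) (hGg : IsWeakGenerator G) (A : C) : P A := by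
  choose X' i p' hX' hip' hkill using
    fun s : Σ' (X : C) (_ : X ⟶ A), P X => exists_prop_extension_killing hPG s.2.1 s.2.2
  obtain ⟨X₀, p₀, hX₀, hp₀⟩ := exists_prop_surjective_cover hPG A
  let tower : ℕ → Σ' (X : C) (_ : X ⟶ A), P X := fun k =>
    Nat.rec (motive := fun _ => Σ' (X : C) (_ : X ⟶ A), P X) ⟨X₀, p₀, hX₀⟩
      (fun _ s => ⟨X' s, p' s, hX' s⟩) k
  let X : ℕ → C := fun k => (tower k).1
  let j : ∀ k, X k ⟶ X (k + 1) := fun k => i (tower k)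
  let p : ∀ k, X k ⟶ A := fun k => (tower k).2.1
  have hjp : ∀ k, j k ≫ p (k + 1) = p k := fun k => hip' (tower k)
  have hsum : P (∐ seqFamily X) := P.prop_colimit _ fun k => (tower k.as.down).2.2
  obtain ⟨Z, hZ, q, d, hT⟩ :=
    P.distinguished_cocone_triangle (𝟙 _ - seqTransition X j) hsum hsum
  have hp : (𝟙 _ - seqTransition X j) ≫ Sigma.desc (fun k : ULift.{v} ℕ => p k.down) = 0 :=
    Sigma.hom_ext _ _ fun ⟨k⟩ => by
      rw [Preadditive.sub_comp, id_comp, Preadditive.comp_sub, ← assoc, ι_seqTransition, assoc,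
        Sigma.ι_desc, Sigma.ι_desc, hjp, sub_self, comp_zero]
  obtain ⟨r, hr⟩ : ∃ r : Z ⟶ A, Sigma.desc (fun k : ULift.{v} ℕ => p k.down) = q ≫ r :=
    Triangle.yoneda_exact₂ _ hT _ hp
  have : IsIso r := IsHocolimTriangle.isIso_of_isWeakGenerator hT hGs hGg hp₀
    (fun k => hkill (tower k)) fun k => by rw [← hr, Sigma.ι_desc]
  exact P.prop_of_iso (asIso r) hZ

end Generation

end Pretriangulated

end Paper

theorem statement_2
    {C : Type u} [Category.{v} C] [HasZeroObject C] [HasShift C ℤ] [Preadditive C]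
    [∀ n : ℤ, (shiftFunctor C n).Additive] [Pretriangulated C] [HasCoproducts.{v} C]
    -- the two symmetric monoidal structures `∧` (`M`) and `∧′` (`M'`):
    (M M' : MonoidalCategory C)
    (sM : @SymmetricCategory C _ M) (sM' : @SymmetricCategory C _ M')
    -- they have the same unit `𝕀`:
    (hunit : M'.tensorUnit = M.tensorUnit)
    -- `∧` is bi-exact:
    (addL : ∀ X : C, (@tensorLeft C _ M X).Additive)
    (addR : ∀ X : C, (@tensorRight C _ M X).Additive)
    (csL : ∀ X : C, Functor.CommShift (@tensorLeft C _ M X) ℤ)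
    (csR : ∀ X : C, Functor.CommShift (@tensorRight C _ M X) ℤ)
    (trL : ∀ X : C, letI := csL X; Functor.IsTriangulated (@tensorLeft C _ M X))
    (trR : ∀ X : C, letI := csR X; Functor.IsTriangulated (@tensorRight C _ M X))
    (pL : ∀ (X : C) (ι : Type v), PreservesColimitsOfShape (Discrete ι) (@tensorLeft C _ M X))
    (pR : ∀ (X : C) (ι : Type v), PreservesColimitsOfShape (Discrete ι) (@tensorRight C _ M X))
    -- `∧′` is bi-exact:
    (addL' : ∀ X : C, (@tensorLeft C _ M' X).Additive)
    (addR' : ∀ X : C, (@tensorRight C _ M' X).Additive)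
    (csL' : ∀ X : C, Functor.CommShift (@tensorLeft C _ M' X) ℤ)
    (csR' : ∀ X : C, Functor.CommShift (@tensorRight C _ M' X) ℤ)
    (trL' : ∀ X : C, letI := csL' X; Functor.IsTriangulated (@tensorLeft C _ M' X))
    (trR' : ∀ X : C, letI := csR' X; Functor.IsTriangulated (@tensorRight C _ M' X))
    (pL' : ∀ (X : C) (ι : Type v), PreservesColimitsOfShape (Discrete ι) (@tensorLeft C _ M' X))
    (pR' : ∀ (X : C) (ι : Type v), PreservesColimitsOfShape (Discrete ι) (@tensorRight C _ M' X))
    -- the unit `𝕀` is a small weak generator: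
    (hunit_small : IsSmallObject M.tensorUnit) (hunit_gen : IsWeakGenerator M.tensorUnit)
    -- the lax monoidal structure on the identity functor from `(T, ∧)` to `(T, ∧′)`:
    (η : M'.tensorUnit ⟶ M.tensorUnit)
    (φ : ∀ A B : C, M'.tensorObj A B ⟶ M.tensorObj A B)
    (hφ_nat : ∀ {A A' B B' : C} (f : A ⟶ A') (g : B ⟶ B'),
      M'.tensorHom f g ≫ φ A' B' = φ A B ≫ M.tensorHom f g)
    -- compatibility of `φ` with the shift in the second variable:
    (hφ_shift₂ : ∀ (n : ℤ) (A B : C),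
      φ A (B⟦n⟧) ≫ (Functor.CommShift.commShiftIso (self := csL A) _ n).hom.app B = (Functor.CommShift.commShiftIso (self := csL' A) _ n).hom.app B ≫ (φ A B)⟦n⟧')
    -- compatibility of `φ` with the shift in the first variable:
    (hφ_shift₁ : ∀ (n : ℤ) (A B : C),
      φ (A⟦n⟧) B ≫ (Functor.CommShift.commShiftIso (self := csR B) _ n).hom.app A = (Functor.CommShift.commShiftIso (self := csR' B) _ n).hom.app A ≫ (φ A B)⟦n⟧')
    -- the coherence diagrams of a lax (symmetric) monoidal functor:
    (hφ_assoc : ∀ A B Z : C,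
      M'.tensorHom (φ A B) (𝟙 Z) ≫ φ (M.tensorObj A B) Z ≫ (M.associator A B Z).hom =
        (M'.associator A B Z).hom ≫ M'.tensorHom (𝟙 A) (φ B Z) ≫ φ A (M.tensorObj B Z))
    (hφ_left_unit : ∀ A : C,
      M'.tensorHom η (𝟙 A) ≫ φ M.tensorUnit A ≫ (M.leftUnitor A).hom = (M'.leftUnitor A).hom)
    (hφ_right_unit : ∀ A : C,
      M'.tensorHom (𝟙 A) η ≫ φ A M.tensorUnit ≫ (M.rightUnitor A).hom = (M'.rightUnitor A).hom)
    (hφ_braided : ∀ A B : C,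
      (sM'.braiding A B).hom ≫ φ B A = φ A B ≫ (sM.braiding A B).hom)
    -- the unit morphism and the comparison map on the units are isomorphisms:
    (hη : IsIso η) (hφ_unit : IsIso (φ M.tensorUnit M.tensorUnit)) :
    ∀ A B : C, IsIso (φ A B) := by
  intro A B
  let := csR B
  let := csR' B
  let ψ : @tensorRight C _ M' B ⟶ @tensorRight C _ M B :=
    { app := fun X => φ X B
      naturality := fun X Y f => by
        have h := hφ_nat f (𝟙 B)
        rwa [@tensorHom_id C _ M', @tensorHom_id C _ M] at h }
  have : NatTrans.CommShift ψ ℤ := ⟨fun n => by ext X; exact (hφ_shift₁ n X B).symm⟩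
  have := trR B
  have := trR' B
  have := pR B
  have := pR' B
  have hψ : IsIso (ψ.app M.tensorUnit) := by
    have : IsIso (M'.tensorHom η (𝟙 B) ≫ φ M.tensorUnit B ≫ (M.leftUnitor B).hom) := by
      rw [hφ_left_unit]
      infer_instance
    have : IsIso (M'.tensorHom η (𝟙 B)) := by
      rw [@tensorHom_id C _ M']
      exact (@tensorRight C _ M' B).map_isIso η
    have := IsIso.of_isIso_comp_left (M'.tensorHom η (𝟙 B))
      (φ M.tensorUnit B ≫ (M.leftUnitor B).hom)
    exact IsIso.of_isIso_comp_right _ (M.leftUnitor B).hom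
  exact prop_of_isSmallObject_of_isWeakGenerator (P := isoLocus ψ) hψ hunit_small hunit_gen A
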